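/- Let Q be a positive-definite integral lattice. If L₁, ..., Lₖ are unimodular sublattices of Q that are pairwise coprime (no common indecomposable orthogonal summands as abstract lattices), then Q represents the orthogonal direct sum L₁ ⊕ ... ⊕ Lₖ. -/

import Mathlib

section Defs

variable {Q : Type*} [AddCommGroup Q] [Module ℤ Q]

/-- `N` is the internal orthogonal direct sum of its submodules `N₁` and `N₂`
(with respect to the bilinear form `B`). -/
def IsOrthDirectSum (B : LinearMap.BilinForm ℤ Q) (N N₁ N₂ : Submodule ℤ Q) : Prop :=
  N₁ ≤ N ∧ N₂ ≤ N ∧ N₁ ⊔ N₂ = N ∧ N₁ ⊓ N₂ = ⊥ ∧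
    ∀ x ∈ N₁, ∀ y ∈ N₂, B x y = 0

/-- `M` is an orthogonal direct summand of `N`. -/
def IsOrthSummand (B : LinearMap.BilinForm ℤ Q) (M N : Submodule ℤ Q) : Prop :=
  ∃ M', IsOrthDirectSum B N M M'

/-- `N` is a nonzero indecomposable lattice: it admits no nontrivial orthogonal
splitting. -/
def Indecomposable' (B : LinearMap.BilinForm ℤ Q) (N : Submodule ℤ Q) : Prop :=
  N ≠ ⊥ ∧ ∀ N₁ N₂, IsOrthDirectSum B N N₁ N₂ → N₁ = ⊥ ∨ N₂ = ⊥

/-- Two sublattices are isometric as abstract lattices. -/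
def IsometricLat (B : LinearMap.BilinForm ℤ Q) (M M' : Submodule ℤ Q) : Prop :=
  ∃ e : M ≃ₗ[ℤ] M', ∀ x y : M, B (e x : Q) (e y : Q) = B (x : Q) (y : Q)

/-- Two sublattices are coprime: they share no indecomposable orthogonal summand
(as abstract lattices, i.e. up to isometry). -/
def CoprimeLat (B : LinearMap.BilinForm ℤ Q) (N N' : Submodule ℤ Q) : Prop :=
  ∀ M M' : Submodule ℤ Q, IsOrthSummand B M N → IsOrthSummand B M' N' →
    Indecomposable' B M → Indecomposable' B M' → ¬ IsometricLat B M M'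

/-- `N` is unimodular: the Gram matrix of a ℤ-basis has determinant ±1. -/
def UnimodularLat (B : LinearMap.BilinForm ℤ Q) (N : Submodule ℤ Q) : Prop :=
  ∃ (ι : Type) (_ : Fintype ι) (_ : DecidableEq ι) (b : Module.Basis ι ℤ N),
    (Matrix.of fun i j => B (b i : Q) (b j : Q)).det = 1 ∨
    (Matrix.of fun i j => B (b i : Q) (b j : Q)).det = -1

end Defs

section Aux

variable {Q : Type*} [AddCommGroup Q] [Module ℤ Q]

/-- An irreducible (indecomposable) vector of the lattice `Q`. -/
def Irr (B : LinearMap.BilinForm ℤ Q) (x : Q) : Prop :=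
  x ≠ 0 ∧ ∀ y z : Q, x = y + z → B y z = 0 → y = 0 ∨ z = 0

/-- Two irreducible vectors are directly linked. -/
def Rrel (B : LinearMap.BilinForm ℤ Q) (a c : Q) : Prop :=
  Irr B a ∧ Irr B c ∧ B a c ≠ 0

/-- The set of vectors orthogonal to a set `S`. -/
def orthSet (B : LinearMap.BilinForm ℤ Q) (S : Set Q) : Submodule ℤ Q where
  carrier := {v | ∀ u ∈ S, B u v = 0}
  add_mem' := by
    intro a b ha hb u hu
    rw [map_add, ha u hu, hb u hu, add_zero]
  zero_mem' := by intro u hu; simp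
  smul_mem' := by
    intro c v hv u hu
    rw [LinearMap.map_smul (B u) c v, hv u hu, smul_zero]

lemma mem_orthSet {B : LinearMap.BilinForm ℤ Q} {S : Set Q} {v : Q} :
    v ∈ orthSet B S ↔ ∀ u ∈ S, B u v = 0 := Iff.rfl

lemma span_orth {B : LinearMap.BilinForm ℤ Q} {S : Set Q} {v : Q}
    (hv : ∀ u ∈ S, B u v = 0) : ∀ m ∈ Submodule.span ℤ S, B m v = 0 := by
  intro m hm
  induction hm using Submodule.span_induction with
  | mem u hu => exact hv u hu
  | zero => simp
  | add a b _ _ ha hb => rw [map_add, LinearMap.add_apply, ha, hb, add_zero]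
  | smul c a _ ha => simp only [LinearMap.map_smul₂, LinearMap.smul_apply, ha, smul_zero]



variable (B : LinearMap.BilinForm ℤ Q)

lemma irr_of_trans {x u : Q} (h : Relation.TransGen (Rrel B) x u) : Irr B u := by
  induction h with
  | single h' => exact h'.2.1
  | tail _ h' _ => exact h'.2.1

lemma trans_symm (hsymm : ∀ x y : Q, B x y = B y x) {a b : Q}
    (h : Relation.TransGen (Rrel B) a b) : Relation.TransGen (Rrel B) b a := by
  induction h with
  | single h' => exact .single ⟨h'.2.1, h'.1, by rw [hsymm]; exact h'.2.2⟩
  | tail _ h' ih => exact .head ⟨h'.2.1, h'.1, by rw [hsymm]; exact h'.2.2⟩ ih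

/-- A connected class of irreducible vectors stays within one side of an
orthogonal splitting. -/
lemma sideConst {A C : Submodule ℤ Q} {x₀ : Q}
    (hside : ∀ u, Relation.TransGen (Rrel B) x₀ u → u ∈ A ∨ u ∈ C)
    (horth : ∀ a ∈ A, ∀ c ∈ C, B a c = 0) (hx₀ : x₀ ∈ A) :
    ∀ u, Relation.TransGen (Rrel B) x₀ u → u ∈ A := by
  intro u h
  induction h with
  | single h' =>
    rename_i b
    rcases hside b (.single h') with h | h
    · exact h
    · exact absurd (horth _ hx₀ _ h) h'.2.2
  | tail h₁ h₂ ih =>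
    rename_i b u'
    rcases hside u' (h₁.tail h₂) with h | h
    · exact h
    · exact absurd (horth _ ih _ h) h₂.2.2

/-- Every vector decomposes into a sum of irreducible vectors. -/
lemma decomp (hsymm : ∀ x y : Q, B x y = B y x) (hpos : ∀ x : Q, x ≠ 0 → 0 < B x x)
    (x : Q) : ∃ l : List Q, (∀ u ∈ l, Irr B u) ∧ l.sum = x := by
  have key : ∀ n : ℕ, ∀ x : Q, (B x x).toNat ≤ n →
      ∃ l : List Q, (∀ u ∈ l, Irr B u) ∧ l.sum = x := by
    intro n
    induction n with
    | zero =>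
      intro x hx
      have hx0 : x = 0 := by
        by_contra h
        have := hpos x h
        omega
      exact ⟨[], by simp, by simp [hx0]⟩
    | succ n ih =>
      intro x hx
      by_cases h0 : x = 0
      · exact ⟨[], by simp, by simp [h0]⟩
      by_cases hirr : Irr B x
      · exact ⟨[x], by simpa using hirr, by simp⟩
      have : ∃ y z : Q, x = y + z ∧ B y z = 0 ∧ ¬(y = 0 ∨ z = 0) := by
        by_contra h
        push_neg at h
        exact hirr ⟨h0, h⟩
      obtain ⟨y, z, hxyz, hBz, hyz⟩ := this
      push_neg at hyz
      obtain ⟨hy, hz⟩ := hyz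
      have hsum : B x x = B y y + B z z := by
        rw [hxyz]
        simp only [map_add, LinearMap.add_apply]
        rw [hBz, hsymm z y, hBz]
        ring
      have hy' := hpos y hy
      have hz' := hpos z hz
      obtain ⟨ly, hly, hlys⟩ := ih y (by omega)
      obtain ⟨lz, hlz, hlzs⟩ := ih z (by omega)
      refine ⟨ly ++ lz, ?_, by rw [List.sum_append, hlys, hlzs, hxyz]⟩
      intro u hu
      rcases List.mem_append.mp hu with h | h
      · exact hly u h
      · exact hlz u h
  exact key (B x x).toNat x le_rfl


lemma B_zsmul_left (c : ℤ) (x y : Q) : B (c • x) y = c * B x y := by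
  have h : B (c • x) y = c • (B x y) := map_zsmul (B.flip y) c x
  rw [h, smul_eq_mul]

lemma B_zsmul_right (c : ℤ) (x y : Q) : B x (c • y) = c * B x y := by
  rw [map_zsmul (B x) c y, smul_eq_mul]

lemma unimod_split (hsymm : ∀ x y : Q, B x y = B y x) {N : Submodule ℤ Q}
    (h : UnimodularLat B N) (x : Q) :
    ∃ a ∈ N, ∀ n ∈ N, B (x - a) n = 0 := by
  obtain ⟨ι, fι, dι, b, hdet⟩ := h
  letI := fι; letI := dι
  set G : Matrix ι ι ℤ := Matrix.of fun i j => B (b i : Q) (b j : Q) with hGdef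
  have hG : IsUnit G.det := by
    rcases hdet with h1 | h1
    · rw [hGdef] at h1 ⊢; rw [h1]; exact isUnit_one
    · rw [hGdef] at h1 ⊢; rw [h1]; exact isUnit_one.neg
  set v : ι → ℤ := fun j => B x (b j : Q) with hvdef
  set w : ι → ℤ := G⁻¹.mulVec v with hwdef
  refine ⟨∑ i, w i • (b i : Q), Submodule.sum_mem _ fun i _ =>
    N.toAddSubgroup.zsmul_mem (b i).2 (w i), ?_⟩
  have hbasis : ∀ j, B (x - ∑ i, w i • (b i : Q)) (b j : Q) = 0 := by
    intro j
    have hBa : B (∑ i, w i • (b i : Q)) (b j : Q) = ∑ i, w i * G i j := by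
      rw [map_sum, LinearMap.sum_apply]
      exact Finset.sum_congr rfl fun i _ => by rw [B_zsmul_left]; rfl
    have hGv : ∑ i, w i * G i j = v j := by
      have h2 : ∑ i, w i * G i j = G.mulVec w j := by
        simp only [Matrix.mulVec, dotProduct]
        exact Finset.sum_congr rfl fun i _ => by
          rw [show G j i = G i j from hsymm (b j : Q) (b i : Q), mul_comm]
      rw [h2, hwdef, Matrix.mulVec_mulVec, Matrix.mul_nonsing_inv G hG,
        Matrix.one_mulVec]
    rw [map_sub, LinearMap.sub_apply, hBa, hGv, sub_self]
  intro n hn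
  have h1 : (⟨n, hn⟩ : N) = ∑ j, b.repr ⟨n, hn⟩ j • b j := (b.sum_repr ⟨n, hn⟩).symm
  have h2 : n = N.subtype (∑ j, b.repr ⟨n, hn⟩ j • b j) := congrArg N.subtype h1
  rw [h2, map_sum, map_sum]
  refine Finset.sum_eq_zero fun j _ => ?_
  have h3 : N.subtype (b.repr ⟨n, hn⟩ j • b j) =
      (b.repr ⟨n, hn⟩ j) • N.subtype (b j) := map_zsmul N.subtype _ _
  rw [h3, B_zsmul_right]
  exact mul_eq_zero_of_right _ (hbasis j)


/-- Each irreducible vector lies in `N` or its orthogonal complement, when `N`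
is unimodular. -/
lemma irr_side (hsymm : ∀ x y : Q, B x y = B y x) {N : Submodule ℤ Q}
    (hN : UnimodularLat B N) {u : Q} (hu : Irr B u) :
    u ∈ N ∨ u ∈ orthSet B (N : Set Q) := by
  obtain ⟨a, ha, hperp⟩ := unimod_split B hsymm hN u
  have horth : B a (u - a) = 0 := by rw [hsymm]; exact hperp a ha
  rcases hu.2 a (u - a) (by abel) horth with h | h
  · right
    intro n hn
    refine (hsymm n u).trans ?_
    have h2 := hperp n hn
    rwa [h, sub_zero] at h2
  · left
    exact (sub_eq_zero.mp h) ▸ ha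


lemma B_list_sum_right (x : Q) (l : List Q) (h : ∀ t ∈ l, B x t = 0) :
    B x l.sum = 0 := by
  induction l with
  | nil => simp
  | cons a t ih =>
    rw [List.sum_cons, map_add, h a List.mem_cons_self,
      ih (fun u hu => h u (List.mem_cons_of_mem a hu)), add_zero]

lemma B_list_sum_left (l : List Q) (y : Q) (h : ∀ s ∈ l, B s y = 0) :
    B l.sum y = 0 := by
  induction l with
  | nil => simp
  | cons a t ih =>
    rw [List.sum_cons, map_add, LinearMap.add_apply, h a List.mem_cons_self,
      ih (fun u hu => h u (List.mem_cons_of_mem a hu)), add_zero]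

/-- Splitting a list of irreducibles along a connected class. -/
lemma split_list (hsymm : ∀ x y : Q, B x y = B y x) (x₀ : Q) (l : List Q)
    (hl : ∀ u ∈ l, Irr B u) :
    ∃ m m', m ∈ Submodule.span ℤ {u | Relation.TransGen (Rrel B) x₀ u} ∧
      (∀ u, Relation.TransGen (Rrel B) x₀ u → B m' u = 0) ∧ l.sum = m + m' := by
  induction l with
  | nil => exact ⟨0, 0, Submodule.zero_mem _, fun u _ => by simp, by simp⟩
  | cons a t ih =>
    obtain ⟨m, m', hm, hm', hsum⟩ := ih (fun u hu => hl u (List.mem_cons_of_mem a hu))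
    by_cases h : Relation.TransGen (Rrel B) x₀ a
    · exact ⟨a + m, m', Submodule.add_mem _ (Submodule.subset_span h) hm, hm', by
        rw [List.sum_cons, hsum]; abel⟩
    · refine ⟨m, a + m', hm, ?_, by rw [List.sum_cons, hsum]; abel⟩
      intro u hu
      have hBau : B a u = 0 := by
        by_contra hne
        exact h (hu.trans (.single ⟨irr_of_trans B hu,
          hl a List.mem_cons_self, by rw [hsymm]; exact hne⟩))
      rw [map_add, LinearMap.add_apply, hBau, hm' u hu, add_zero]

/-- Every element of a unimodular sublattice decomposes into irreducible
vectors lying in the sublattice. -/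
lemma decomp_in (hsymm : ∀ x y : Q, B x y = B y x)
    (hpos : ∀ x : Q, x ≠ 0 → 0 < B x x) {N : Submodule ℤ Q}
    (hN : UnimodularLat B N) {x : Q} (hx : x ∈ N) :
    ∃ l : List Q, (∀ u ∈ l, Irr B u ∧ u ∈ N) ∧ l.sum = x := by
  obtain ⟨l, hl, hls⟩ := decomp B hsymm hpos x
  have key : ∀ l : List Q, (∀ u ∈ l, Irr B u) → ∃ lN : List Q, ∃ c : Q,
      (∀ u ∈ lN, Irr B u ∧ u ∈ N) ∧ c ∈ orthSet B (N : Set Q) ∧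
      l.sum = lN.sum + c := by
    intro l
    induction l with
    | nil => exact fun _ => ⟨[], 0, by simp, Submodule.zero_mem _, by simp⟩
    | cons a t ih =>
      intro hl
      obtain ⟨lN, c, h1, h2, h3⟩ := ih (fun u hu => hl u (List.mem_cons_of_mem a hu))
      have ha := hl a List.mem_cons_self
      rcases irr_side B hsymm hN ha with h | h
      · refine ⟨a :: lN, c, ?_, h2, by rw [List.sum_cons, List.sum_cons, h3]; abel⟩
        intro u hu
        rcases List.mem_cons.mp hu with rfl | hu
        · exact ⟨ha, h⟩
        · exact h1 u hu
      · exact ⟨lN, a + c, h1, Submodule.add_mem _ h h2, by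
          rw [List.sum_cons, h3]; abel⟩
  obtain ⟨lN, c, h1, h2, h3⟩ := key l hl
  have hlNsum : lN.sum ∈ N := list_sum_mem (fun u hu => (h1 u hu).2)
  have hcN : c ∈ N := by
    have hc : c = x - lN.sum := by rw [← hls, h3]; abel
    rw [hc]
    exact Submodule.sub_mem _ hx hlNsum
  have hc0 : c = 0 := by
    by_contra h
    exact absurd (h2 c hcN) (ne_of_gt (hpos c h))
  exact ⟨lN, h1, by rw [← hls, h3, hc0, add_zero]⟩

/-- The span of a connected class contained in `A` is an orthogonal summand
of `A`. -/
lemma class_summand (hsymm : ∀ x y : Q, B x y = B y x)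
    (hpos : ∀ x : Q, x ≠ 0 → 0 < B x x) {A : Submodule ℤ Q} {s : Q}
    (hK : ∀ u, Relation.TransGen (Rrel B) s u → u ∈ A) :
    IsOrthSummand B (Submodule.span ℤ {u | Relation.TransGen (Rrel B) s u}) A := by
  set K : Set Q := {u | Relation.TransGen (Rrel B) s u} with hKdef
  have hMA : Submodule.span ℤ K ≤ A := Submodule.span_le.mpr hK
  refine ⟨orthSet B K ⊓ A, hMA, inf_le_right, ?_, ?_, ?_⟩
  · apply le_antisymm (sup_le hMA inf_le_right)
    intro wq hw
    obtain ⟨l, hl, hls⟩ := decomp B hsymm hpos wq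
    obtain ⟨m, m', hm, hm', hsum⟩ := split_list B hsymm s l hl
    have hm'A : m' ∈ A := by
      have h4 : m' = wq - m := by rw [← hls, hsum]; abel
      rw [h4]
      exact Submodule.sub_mem _ hw (hMA hm)
    exact Submodule.mem_sup.mpr ⟨m, hm, m',
      ⟨fun u hu => by rw [hsymm]; exact hm' u hu, hm'A⟩, by rw [← hls, hsum]⟩
  · rw [eq_bot_iff]
    intro z hz
    have hBzz : B z z = 0 := span_orth (fun u hu => hz.2.1 u hu) z hz.1
    have : z = 0 := by
      by_contra h
      exact absurd hBzz (ne_of_gt (hpos z h))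
    simp [this]
  · intro p hp y hy
    exact span_orth (fun u hu => hy.1 u hu) p hp

/-- The span of a connected class is indecomposable. -/
lemma class_indec (hsymm : ∀ x y : Q, B x y = B y x)
    (hpos : ∀ x : Q, x ≠ 0 → 0 < B x x) {s : Q} (hs : Irr B s) :
    Indecomposable' B (Submodule.span ℤ {u | Relation.TransGen (Rrel B) s u}) := by
  have hss : Relation.TransGen (Rrel B) s s :=
    .single ⟨hs, hs, ne_of_gt (hpos s hs.1)⟩
  constructor
  · intro hbot
    have h0 : s ∈ (⊥ : Submodule ℤ Q) := hbot ▸ Submodule.subset_span hss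
    exact hs.1 (by simpa using h0)
  · rintro N₁ N₂ ⟨h1, h2, hsup, hinf, horth⟩
    have hside : ∀ u, Relation.TransGen (Rrel B) s u → u ∈ N₁ ∨ u ∈ N₂ := by
      intro u hu
      have huM : u ∈ N₁ ⊔ N₂ := hsup.symm ▸ Submodule.subset_span hu
      obtain ⟨n₁, hn₁, n₂, hn₂, hsum⟩ := Submodule.mem_sup.mp huM
      rcases (irr_of_trans B hu).2 n₁ n₂ hsum.symm (horth n₁ hn₁ n₂ hn₂) with h | h
      · right; rw [← hsum, h, zero_add]; exact hn₂
      · left; rw [← hsum, h, add_zero]; exact hn₁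
    rcases hside s hss with h | h
    · right
      have hKN : ∀ u, Relation.TransGen (Rrel B) s u → u ∈ N₁ :=
        sideConst B hside horth h
      rw [eq_bot_iff]
      intro z hz
      rw [← hinf]
      exact ⟨Submodule.span_le.mpr hKN (h2 hz), hz⟩
    · left
      have hKN : ∀ u, Relation.TransGen (Rrel B) s u → u ∈ N₂ :=
        sideConst B (fun u hu => (hside u hu).symm)
          (fun a ha c hc => by rw [hsymm]; exact horth c hc a ha) h
      rw [eq_bot_iff]
      intro z hz
      rw [← hinf]
      exact ⟨hz, Submodule.span_le.mpr hKN (h1 hz)⟩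

/-- The key orthogonality: coprime unimodular sublattices are orthogonal. -/
lemma main_orth (hsymm : ∀ x y : Q, B x y = B y x)
    (hpos : ∀ x : Q, x ≠ 0 → 0 < B x x) {A A' : Submodule ℤ Q}
    (hA : UnimodularLat B A) (hA' : UnimodularLat B A')
    (hcop : CoprimeLat B A A') {x y : Q} (hx : x ∈ A) (hy : y ∈ A') :
    B x y = 0 := by
  by_contra hne
  obtain ⟨l, hl, hls⟩ := decomp_in B hsymm hpos hA hx
  obtain ⟨l', hl', hls'⟩ := decomp_in B hsymm hpos hA' hy
  have hex : ∃ s ∈ l, ∃ t ∈ l', B s t ≠ 0 := by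
    by_contra hf
    push_neg at hf
    exact hne (by
      rw [← hls, ← hls']
      exact B_list_sum_left B l _ (fun u hu => B_list_sum_right B u l' (hf u hu)))
  obtain ⟨s, hsl, t, htl, hBst⟩ := hex
  obtain ⟨hsIrr, hsA⟩ := hl s hsl
  obtain ⟨htIrr, htA'⟩ := hl' t htl
  have hst : Relation.TransGen (Rrel B) s t := .single ⟨hsIrr, htIrr, hBst⟩
  have hKA : ∀ u, Relation.TransGen (Rrel B) s u → u ∈ A :=
    sideConst B (fun u hu => irr_side B hsymm hA (irr_of_trans B hu))
      (fun a ha c hc => hc a ha) hsA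
  have hKA' : ∀ u, Relation.TransGen (Rrel B) s u → u ∈ A' := by
    have hKt : ∀ u, Relation.TransGen (Rrel B) t u → u ∈ A' :=
      sideConst B (fun u hu => irr_side B hsymm hA' (irr_of_trans B hu))
        (fun a ha c hc => hc a ha) htA'
    intro u hu
    exact hKt u ((trans_symm B hsymm hst).trans hu)
  exact hcop _ _ (class_summand B hsymm hpos hKA) (class_summand B hsymm hpos hKA')
    (class_indec B hsymm hpos hsIrr) (class_indec B hsymm hpos hsIrr)
    ⟨LinearEquiv.refl ℤ _, fun _ _ => rfl⟩

end Aux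

/-- if L₁, ..., Lₖ are unimodular sublattices of a positive-definite
integral lattice Q that are pairwise coprime (no common indecomposable orthogonal
summands, as abstract lattices), then Q represents the orthogonal direct sum
L₁ ⊕ ... ⊕ Lₖ. -/
theorem represents_orth_sum_of_coprime_unimodular (Q : Type*) [AddCommGroup Q]
    [Module ℤ Q] [Module.Free ℤ Q] [Module.Finite ℤ Q]
    (B : LinearMap.BilinForm ℤ Q)
    (hsymm : ∀ x y : Q, B x y = B y x)
    (hpos : ∀ x : Q, x ≠ 0 → 0 < B x x)
    (k : ℕ) (L : Fin k → Submodule ℤ Q)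
    (huni : ∀ i, UnimodularLat B (L i))
    (hcop : ∀ i j, i ≠ j → CoprimeLat B (L i) (L j)) :
    ∃ φ : ((i : Fin k) → (L i)) →ₗ[ℤ] Q, Function.Injective φ ∧
      ∀ x y : (i : Fin k) → (L i),
        B (φ x) (φ y) = ∑ i : Fin k, B ((x i : Q)) ((y i : Q)) := by
  rename_i iM iF iFin
  letI : Unique (Module ℤ Q) := AddCommGroup.uniqueIntModule
  have hM : iM = AddCommGroup.toIntModule Q := Subsingleton.elim _ _
  subst hM
  have horth : ∀ i j : Fin k, i ≠ j → ∀ x ∈ L i, ∀ y ∈ L j, B x y = 0 :=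
    fun i j hij x hx y hy =>
      main_orth B hsymm hpos (huni i) (huni j) (hcop i j hij) hx hy
  set F : ((i : Fin k) → (L i)) →+ Q :=
    { toFun := fun x => ∑ i, ((x i : Q)),
      map_zero' := by simp,
      map_add' := fun a b => by simp [Finset.sum_add_distrib] } with hF
  refine ⟨{ toFun := F, map_add' := F.map_add,
            map_smul' := fun c a => map_zsmul F c a }, ?_, ?_⟩
  · -- injectivity
    have key : ∀ x : (i : Fin k) → L i, (∑ i, ((x i : Q))) = 0 → x = 0 := by
      intro x hx0
      funext j
      have h1 : B (x j : Q) (∑ i, ((x i : Q))) = 0 := by rw [hx0, map_zero]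
      rw [map_sum] at h1
      have h2 : ∑ i, B ((x j : Q)) ((x i : Q)) = B (x j : Q) (x j : Q) :=
        Finset.sum_eq_single j
          (fun i _ hij => horth j i (Ne.symm hij) _ (x j).2 _ (x i).2)
          (fun h => absurd (Finset.mem_univ j) h)
      rw [h2] at h1
      have h3 : (x j : Q) = 0 := by
        by_contra h
        exact absurd h1 (ne_of_gt (hpos _ h))
      exact Subtype.ext h3
    intro a b hab
    have hab' : (∑ i, ((a i : Q))) = ∑ i, ((b i : Q)) := hab
    have h4 : (∑ i, (((a - b) i : Q))) = 0 := by
      have h5 : (∑ i, (((a - b) i : Q))) =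
          (∑ i, ((a i : Q))) - ∑ i, ((b i : Q)) := by
        rw [← Finset.sum_sub_distrib]
        exact Finset.sum_congr rfl fun i _ => by simp
      rw [h5, sub_eq_zero]
      exact hab'
    exact sub_eq_zero.mp (key (a - b) h4)
  · -- the form
    intro x y
    show B (∑ i, ((x i : Q))) (∑ j, ((y j : Q))) = _
    rw [map_sum]
    refine Finset.sum_congr rfl fun j _ => ?_
    rw [map_sum, LinearMap.sum_apply]
    exact Finset.sum_eq_single j
      (fun i _ hij => horth i j hij _ (x i).2 _ (y j).2)
      (fun h => absurd (Finset.mem_univ j) h)
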